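/- Let G be a finite simple graph with clique vertex partition π = {A_1, …, A_t} and let G^π be the associated clique-whiskered graph with whisker vertices v_1, …, v_t. Then for every minimal vertex cover C of G^π and every i ∈ {1, …, t}, one has |N_{G^π}[v_i] ∩ C| = |N_{G^π}[v_i]| − 1. -/

import Mathlib

/-!
The closed neighbourhood `{v_i} ∪ A_i` of a whisker vertex is a clique of `G^π`. A vertex cover
misses at most one vertex of a clique, since two missed vertices would span an uncovered edge.
A minimal vertex cover cannot contain a whole closed neighbourhood `N[v]`: dropping `v` would
leave every edge at `v` covered by the other endpoint. Hence `C` misses exactly one vertex of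
`N[v_i]`.
-/

open scoped Classical

namespace PaperHS

/-- A set of vertices is a vertex cover of a simple graph if it meets every edge. -/
def IsVertexCover {U : Type*} (H : SimpleGraph U) (C : Set U) : Prop :=
  ∀ ⦃a b : U⦄, H.Adj a b → a ∈ C ∨ b ∈ C

/-- A vertex cover is minimal if no proper subset is a vertex cover. -/
def IsMinVertexCover {U : Type*} (H : SimpleGraph U) (C : Set U) : Prop :=
  IsVertexCover H C ∧ ∀ D : Set U, D ⊂ C → ¬ IsVertexCover H D

/-- The closed neighborhood `N_H[v]`. -/
def closedNbhd {U : Type*} (H : SimpleGraph U) (v : U) : Set U :=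
  insert v (H.neighborSet v)

/-- The clique-whiskered graph `G^π`: vertices of `G` together with one whisker
vertex `v_i` (encoded `Sum.inr i`) for each clique `A i` of the partition,
joined to all vertices of `A i`. -/
def cliqueWhisker {V ι : Type*} (G : SimpleGraph V) (A : ι → Set V) :
    SimpleGraph (V ⊕ ι) :=
  SimpleGraph.fromRel (fun x y =>
    match x, y with
    | Sum.inl a, Sum.inl b => G.Adj a b
    | Sum.inl a, Sum.inr i => a ∈ A i
    | _, _ => False)

section VertexCover

variable {U : Type*} {H : SimpleGraph U} {C : Set U}

theorem IsVertexCover.subsingleton_clique_diff (hC : IsVertexCover H C) {K : Set U}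
    (hK : H.IsClique K) : (K \ C).Subsingleton := by
  rintro a ⟨haK, haC⟩ b ⟨hbK, hbC⟩
  by_contra hne
  rcases hC (hK haK hbK hne) with h | h
  exacts [haC h, hbC h]

theorem IsMinVertexCover.not_closedNbhd_subset (hC : IsMinVertexCover H C) (v : U) :
    ¬ closedNbhd H v ⊆ C := by
  intro hsub
  have hv : v ∈ C := hsub (Set.mem_insert v _)
  refine hC.2 (C \ {v}) (Set.sdiff_singleton_ssubset.mpr hv) fun a b hab => ?_
  by_cases ha : a = v
  · subst ha
    exact Or.inr ⟨hsub (Set.mem_insert_of_mem _ hab), fun h => hab.ne h.symm⟩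
  by_cases hb : b = v
  · subst hb
    exact Or.inl ⟨hsub (Set.mem_insert_of_mem _ hab.symm), ha⟩
  rcases hC.1 hab with h | h
  exacts [Or.inl ⟨h, ha⟩, Or.inr ⟨h, hb⟩]

theorem IsMinVertexCover.ncard_closedNbhd_inter (hC : IsMinVertexCover H C) {v : U}
    (hK : H.IsClique (closedNbhd H v)) :
    (closedNbhd H v ∩ C).ncard = (closedNbhd H v).ncard - 1 := by
  obtain ⟨x, hx⟩ : ∃ x, closedNbhd H v \ C = {x} :=
    ((hC.1.subsingleton_clique_diff hK).eq_empty_or_singleton.resolve_left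
      (Set.sdiff_eq_empty.not.mpr (hC.not_closedNbhd_subset v)))
  have hxK : x ∈ closedNbhd H v := (hx.symm ▸ Set.mem_singleton x : x ∈ _ \ C).1
  rw [← Set.sdiff_sdiff_right_self, hx, Set.ncard_sdiff_singleton_of_mem hxK]

end VertexCover

section CliqueWhisker

variable {V ι : Type*} (G : SimpleGraph V) (A : ι → Set V)

theorem cliqueWhisker_adj_inl_inl {a b : V} :
    (cliqueWhisker G A).Adj (Sum.inl a) (Sum.inl b) ↔ G.Adj a b := by
  simp only [cliqueWhisker, SimpleGraph.fromRel_adj, ne_eq, Sum.inl.injEq]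
  exact ⟨fun h => h.2.elim id G.adj_symm, fun h => ⟨h.ne, Or.inl h⟩⟩

theorem neighborSet_cliqueWhisker_inr (i : ι) :
    (cliqueWhisker G A).neighborSet (Sum.inr i) = Sum.inl '' A i := by
  ext (a | j) <;> simp [cliqueWhisker]

theorem isClique_closedNbhd_cliqueWhisker {i : ι} (hAi : G.IsClique (A i)) :
    (cliqueWhisker G A).IsClique (closedNbhd (cliqueWhisker G A) (Sum.inr i)) := by
  refine SimpleGraph.IsClique.insert ?_ fun b hb _ => hb
  rw [neighborSet_cliqueWhisker_inr]
  rintro _ ⟨a, ha, rfl⟩ _ ⟨b, hb, rfl⟩ hne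
  exact (cliqueWhisker_adj_inl_inl G A).mpr (hAi ha hb (hne ∘ congrArg Sum.inl))

end CliqueWhisker

theorem statement0_general {V ι : Type*}
    (G : SimpleGraph V) (A : ι → Set V)
    (hclique : ∀ i, G.IsClique (A i))
    (C : Set (V ⊕ ι))
    (hC : IsMinVertexCover (cliqueWhisker G A) C) (i : ι) :
    (closedNbhd (cliqueWhisker G A) (Sum.inr i) ∩ C).ncard
      = (closedNbhd (cliqueWhisker G A) (Sum.inr i)).ncard - 1 :=
  hC.ncard_closedNbhd_inter (isClique_closedNbhd_cliqueWhisker G A (hclique i))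

theorem statement0 {V ι : Type*} [Fintype V] [Fintype ι]
    (G : SimpleGraph V) (A : ι → Set V)
    (hA : ∀ a : V, ∃! i, a ∈ A i)
    (hclique : ∀ i, G.IsClique (A i))
    (C : Set (V ⊕ ι))
    (hC : IsMinVertexCover (cliqueWhisker G A) C) (i : ι) :
    (closedNbhd (cliqueWhisker G A) (Sum.inr i) ∩ C).ncard
      = (closedNbhd (cliqueWhisker G A) (Sum.inr i)).ncard - 1 :=
  statement0_general G A hclique C hC i

end PaperHS
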